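/- Let N = (V, E, c) be a network, let f_1, …, f_n be flows on N, and for each i let paths(f_i) be a finite list of simple valid paths for f_i. If (α, ρ, ε) is an ILP assignment satisfying constraints (i)–(iv), then: (a) for each i there is at most one index m with ρ_{i,m} = 1; (b) the induced mapping S (sending f_i to paths(f_i)_m when ρ_{i,m} = 1 and to the empty path otherwise) assigns to every flow a simple path that is valid for it; and (c) for every edge (j,l) ∈ E, the sum of b(f_i) over all flows f_i whose assigned path S(f_i) traverses (j,l) is at most c((j,l)); in particular S is a feasible mapping. -/

import Mathlib

/-- A network flow: source node, destination node, and required bandwidth. -/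
structure NetFlow (V : Type) where
  s : V
  d : V
  b : ℕ

/-- The list of nodes visited by a path (a path is a list of directed edges). -/
def pathNodes {V : Type} : List (V × V) → List V
  | [] => []
  | e :: rest => e.1 :: (e :: rest).map Prod.snd

/-- A path is simple if it visits no node twice. -/
def IsSimplePath {V : Type} (p : List (V × V)) : Prop :=
  (pathNodes p).Nodup

/-- A (nonempty) path is valid for source `s` and destination `d` in edge set `E`:
all its edges lie in `E`, it starts at `s`, ends at `d`, and is connected. -/
def IsValidPath {V : Type} (E : Finset (V × V)) (s d : V) (p : List (V × V)) : Prop :=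
  p ≠ [] ∧ (∀ e ∈ p, e ∈ E) ∧ p.head?.map Prod.fst = some s ∧
    p.getLast?.map Prod.snd = some d ∧ p.Chain' (fun e e' => e.2 = e'.1)

/-- A mapping `S` of flows to paths (the empty path `[]` meaning the flow is dropped) is
feasible if every assigned path is simple and valid for its flow, and for every edge the
total bandwidth of the flows routed through it does not exceed its capacity. -/
def Feasible {V : Type} [DecidableEq V] {n : ℕ} (E : Finset (V × V)) (c : V × V → ℕ)
    (f : Fin n → NetFlow V) (S : Fin n → List (V × V)) : Prop :=
  (∀ i, S i = [] ∨ (IsSimplePath (S i) ∧ IsValidPath E (f i).s (f i).d (S i))) ∧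
  ∀ e ∈ E, (∑ i, if e ∈ S i then (f i).b else 0) ≤ c e

/-- The ILP constraints (binarity of all variables together with constraints (i)–(iv)). -/
def ILPConstraints {V : Type} {n : ℕ} (E : Finset (V × V)) (c : V × V → ℕ)
    (f : Fin n → NetFlow V) (paths : Fin n → List (List (V × V)))
    (α : Fin n → ℕ) (ρ : (i : Fin n) → Fin (paths i).length → ℕ)
    (ε : Fin n → V × V → ℕ) : Prop :=
  (∀ i, α i ≤ 1) ∧ (∀ i m, ρ i m ≤ 1) ∧ (∀ i e, ε i e ≤ 1) ∧
  -- (i) a flow is admitted iff exactly one of its candidate paths is chosen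
  (∀ i, (∑ m, ρ i m) = α i) ∧
  -- (ii) if a path is chosen, all its edges must route the flow
  (∀ i (m : Fin (paths i).length),
      ((paths i).get m).length * ρ i m ≤ (((paths i).get m).map (ε i)).sum) ∧
  -- (iii) capacity of every edge is respected
  (∀ e ∈ E, (∑ i, (f i).b * ε i e) ≤ c e) ∧
  -- (iv) edges not occurring in any candidate path of a flow cannot route it
  (∀ i e, (∀ p ∈ paths i, e ∉ p) → ε i e = 0)

/-- The total priority of the flows admitted by a mapping `S`. -/
def admittedPriority {V : Type} [DecidableEq V] {n : ℕ} (P : NetFlow V → ℕ)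
    (f : Fin n → NetFlow V) (S : Fin n → List (V × V)) : ℕ :=
  ∑ i, if S i ≠ [] then P (f i) else 0

/-! If path `m` of flow `i` is selected, constraint (ii) makes the sum of the binary variables
`ε i e` over its edges reach its length, so every edge of the path has `ε i e = 1`. Hence the
load that the induced mapping puts on an edge is dominated termwise by the left side of the
capacity constraint (iii). Constraint (i) with `α i ≤ 1` leaves room for only one selected path. -/

theorem List.eq_one_of_length_le_sum_map {α : Type*} {l : List α} {g : α → ℕ}
    (hg : ∀ a ∈ l, g a ≤ 1) (hsum : l.length ≤ (l.map g).sum) : ∀ a ∈ l, g a = 1 := by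
  by_contra! hne
  obtain ⟨a, ha, hga⟩ := hne
  have hlt : (l.map g).sum < (l.map fun _ => 1).sum :=
    List.sum_lt_sum g _ hg ⟨a, ha, by have := hg a ha; omega⟩
  simp only [List.map_const', List.sum_replicate, smul_eq_mul, mul_one] at hlt
  omega

theorem Finset.eq_of_sum_le_one {ι : Type*} [Fintype ι] {x : ι → ℕ} (hx : ∑ k, x k ≤ 1)
    {m m' : ι} (hm : x m = 1) (hm' : x m' = 1) : m = m' := by
  classical
  by_contra hne
  have hpair : x m + x m' ≤ ∑ k, x k := by
    rw [← Finset.sum_pair hne]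
    exact Finset.sum_le_sum_of_subset (Finset.subset_univ _)
  omega

section InducedMapping

variable {V : Type} {n : ℕ} {paths : Fin n → List (List (V × V))}
  {ρ : (i : Fin n) → Fin (paths i).length → ℕ} {S : Fin n → List (V × V)}

theorem eq_nil_or_exists_selected (hS₁ : ∀ i m, ρ i m = 1 → S i = (paths i).get m)
    (hS₂ : ∀ i, (∀ m, ρ i m ≠ 1) → S i = []) (i : Fin n) :
    S i = [] ∨ ∃ m, ρ i m = 1 ∧ S i = (paths i).get m := by
  by_cases hsel : ∃ m, ρ i m = 1
  · obtain ⟨m, hm⟩ := hsel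
    exact .inr ⟨m, hm, hS₁ i m hm⟩
  · exact .inl (hS₂ i fun m hm => hsel ⟨m, hm⟩)

namespace ILPConstraints

variable {E : Finset (V × V)} {c : V × V → ℕ} {f : Fin n → NetFlow V} {α : Fin n → ℕ}
  {ε : Fin n → V × V → ℕ}

theorem selected_unique (h : ILPConstraints E c f paths α ρ ε) (i : Fin n)
    {m m' : Fin (paths i).length} (hm : ρ i m = 1) (hm' : ρ i m' = 1) : m = m' := by
  obtain ⟨hα, -, -, hsum, -⟩ := h
  exact Finset.eq_of_sum_le_one ((hsum i).trans_le (hα i)) hm hm'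

theorem edge_eq_one_of_mem_selected (h : ILPConstraints E c f paths α ρ ε) {i : Fin n}
    {m : Fin (paths i).length} (hm : ρ i m = 1) {e : V × V} (he : e ∈ (paths i).get m) :
    ε i e = 1 := by
  obtain ⟨-, -, hε, -, hcover, -⟩ := h
  have hpath := hcover i m
  rw [hm, mul_one] at hpath
  exact List.eq_one_of_length_le_sum_map (fun a _ => hε i a) hpath e he

theorem routed_le_capacity [DecidableEq V] (h : ILPConstraints E c f paths α ρ ε)
    (hS₁ : ∀ i m, ρ i m = 1 → S i = (paths i).get m)
    (hS₂ : ∀ i, (∀ m, ρ i m ≠ 1) → S i = []) :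
    ∀ e ∈ E, (∑ i, if e ∈ S i then (f i).b else 0) ≤ c e := by
  intro e heE
  have hcap := h.2.2.2.2.2.1 e heE
  refine le_trans (Finset.sum_le_sum fun i _ => ?_) hcap
  split_ifs with he
  · rcases eq_nil_or_exists_selected hS₁ hS₂ i with hnil | ⟨m, hm, hSi⟩
    · simp [hnil] at he
    · rw [h.edge_eq_one_of_mem_selected hm (hSi ▸ he), mul_one]
  · exact Nat.zero_le _

end ILPConstraints

end InducedMapping

/-- Any ILP assignment satisfying constraints (i)–(iv) selects at most one path per flow,
and the induced mapping assigns to every flow a simple valid (or empty) path and respects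
all edge capacities; in particular it is a feasible mapping. -/
theorem ilp_assignment_induces_feasible_mapping {V : Type} [DecidableEq V] {n : ℕ}
    (E : Finset (V × V)) (c : V × V → ℕ) (f : Fin n → NetFlow V)
    (paths : Fin n → List (List (V × V)))
    -- every member of `paths i` is a simple valid path for the flow `f i`
    (hpaths : ∀ i, ∀ p ∈ paths i, IsSimplePath p ∧ IsValidPath E (f i).s (f i).d p)
    (α : Fin n → ℕ) (ρ : (i : Fin n) → Fin (paths i).length → ℕ)
    (ε : Fin n → V × V → ℕ)
    (hILP : ILPConstraints E c f paths α ρ ε)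
    (S : Fin n → List (V × V))
    -- `S` sends `f i` to `paths(f_i)_m` whenever `ρ i m = 1`, and to the empty path otherwise
    (hS₁ : ∀ i m, ρ i m = 1 → S i = (paths i).get m)
    (hS₂ : ∀ i, (∀ m, ρ i m ≠ 1) → S i = []) :
    -- (a) at most one path index is selected per flow
    (∀ i (m m' : Fin (paths i).length), ρ i m = 1 → ρ i m' = 1 → m = m') ∧
    -- (b) every flow is assigned a simple valid path (or the empty path)
    (∀ i, S i = [] ∨ (IsSimplePath (S i) ∧ IsValidPath E (f i).s (f i).d (S i))) ∧
    -- (c) the bandwidth routed through every edge does not exceed its capacity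
    (∀ e ∈ E, (∑ i, if e ∈ S i then (f i).b else 0) ≤ c e) ∧
    -- in particular, `S` is a feasible mapping
    Feasible E c f S := by
  have hvalid : ∀ i, S i = [] ∨ (IsSimplePath (S i) ∧ IsValidPath E (f i).s (f i).d (S i)) := by
    intro i
    rcases eq_nil_or_exists_selected hS₁ hS₂ i with hnil | ⟨m, -, hSi⟩
    · exact .inl hnil
    · exact .inr (hSi ▸ hpaths i _ (List.get_mem _ _))
  have hcap := hILP.routed_le_capacity hS₁ hS₂
  exact ⟨fun i _ _ => hILP.selected_unique i, hvalid, hcap, hvalid, hcap⟩
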